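/- Let ∇ be a flat connection on M compatible with t_a (∇_a t_b = 0, curvature zero) and let ∇' = (∇, C^a_{bc}) with C^a_{bc} = −t_b t_c φ^a, where t_a is closed and φ^a satisfies t_a φ^a = 0. Then the Ricci tensor of ∇' is R'_{ab} = (∇_n φ^n) t_a t_b. In particular, if ∇_n φ^n = 4πρ (Poisson's equation in divergence form), then R'_{ab} = 4πρ t_a t_b (the geometrized Poisson equation). -/

import Mathlib

open scoped BigOperators Real

/-- The partial derivative `∂_i f` on `ℝ⁴` in Cartesian coordinates.  We work in global
Cartesian (affine) coordinates for the flat connection `∇`, in which `∇` is coordinate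
differentiation; compatibility `∇_a t_b = 0` then says that the closed covector field `t_a`
has constant components. -/
noncomputable def pd (i : Fin 4) (f : (Fin 4 → ℝ) → ℝ) (x : Fin 4 → ℝ) : ℝ :=
  fderiv ℝ f x (Pi.single i 1)

/-- The Christoffel symbols of the connection `∇' = (∇, C)` relative to the flat connection
`∇`, with difference tensor `C^a_{bc} = −t_b t_c φ^a`: here `t` is the (constant) temporal
covector and `φ` the gravitational field. -/
def christoffel (t : Fin 4 → ℝ) (φ : (Fin 4 → ℝ) → Fin 4 → ℝ)
    (x : Fin 4 → ℝ) (a b c : Fin 4) : ℝ :=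
  -(t b * t c * φ x a)

/-- The Riemann curvature tensor `R^a_{bcd}` of a connection given by Christoffel symbols
`Γ` relative to the flat coordinate connection:
`R^a_{bcd} = ∂_d Γ^a_{bc} − ∂_c Γ^a_{bd} + Γ^a_{nd} Γ^n_{bc} − Γ^a_{nc} Γ^n_{bd}`. -/
noncomputable def riemann (Γ : (Fin 4 → ℝ) → Fin 4 → Fin 4 → Fin 4 → ℝ)
    (x : Fin 4 → ℝ) (a b c d : Fin 4) : ℝ :=
  pd d (fun y => Γ y a b c) x - pd c (fun y => Γ y a b d) x
    + ∑ n, (Γ x a n d * Γ x n b c - Γ x a n c * Γ x n b d)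

/-- The Ricci tensor `R_{bd} = R^a_{bad}`. -/
noncomputable def ricci (Γ : (Fin 4 → ℝ) → Fin 4 → Fin 4 → Fin 4 → ℝ)
    (x : Fin 4 → ℝ) (b d : Fin 4) : ℝ :=
  ∑ a, riemann Γ x a b a d

lemma pd_const_mul (i : Fin 4) (c : ℝ) (f : (Fin 4 → ℝ) → ℝ) (x : Fin 4 → ℝ)
    (hf : DifferentiableAt ℝ f x) :
    pd i (fun y => c * f y) x = c * pd i f x := by
  unfold pd
  rw [fderiv_const_mul hf]
  simp

lemma pd_sum (i : Fin 4) (f : Fin 4 → (Fin 4 → ℝ) → ℝ) (x : Fin 4 → ℝ)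
    (hf : ∀ a, DifferentiableAt ℝ (f a) x) :
    ∑ a, pd i (f a) x = pd i (fun y => ∑ a, f a y) x := by
  unfold pd
  rw [fderiv_fun_sum (fun a _ => hf a)]
  simp

/-- **curvature computation of Trautman's geometrization theorem.**
Let `∇` be a flat connection compatible with the closed covector field `t_a` (in the
corresponding Cartesian coordinates `∇` is coordinate differentiation and `t` is constant),
and let `∇' = (∇, C)` with `C^a_{bc} = −t_b t_c φ^a`, where `t_a φ^a = 0`.  Then the Ricci
tensor of `∇'` is `R'_{ab} = (∇_n φ^n) t_a t_b`; in particular, if `∇_n φ^n = 4πρ`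
(Poisson's equation in divergence form), then `R'_{ab} = 4πρ t_a t_b` (the geometrized
Poisson equation). -/
theorem ricci_of_geometrized_connection
    (t : Fin 4 → ℝ) (φ : (Fin 4 → ℝ) → Fin 4 → ℝ)
    (hφ : ∀ a, ContDiff ℝ (⊤ : ℕ∞) (fun x => φ x a))
    (hspacelike : ∀ x, ∑ a, t a * φ x a = 0) :
    (∀ x b d, ricci (christoffel t φ) x b d =
      (∑ n, pd n (fun y => φ y n) x) * (t b * t d)) ∧
    (∀ ρ : (Fin 4 → ℝ) → ℝ,
      (∀ x, ∑ n, pd n (fun y => φ y n) x = 4 * π * ρ x) →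
      ∀ x b d, ricci (christoffel t φ) x b d = 4 * π * ρ x * (t b * t d)) := by
  have hdiff : ∀ (a : Fin 4) (x : Fin 4 → ℝ), DifferentiableAt ℝ (fun y => φ y a) x :=
    fun a x => ((hφ a).differentiable (by simp)).differentiableAt
  have key : ∀ (d : Fin 4) (x : Fin 4 → ℝ),
      ∑ a, t a * pd d (fun y => φ y a) x = 0 := by
    intro d x
    have h1 : ∀ a : Fin 4, t a * pd d (fun y => φ y a) x
        = pd d (fun y => t a * φ y a) x :=
      fun a => (pd_const_mul d (t a) _ x (hdiff a x)).symm
    calc ∑ a, t a * pd d (fun y => φ y a) x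
        = ∑ a, pd d (fun y => t a * φ y a) x := Finset.sum_congr rfl fun a _ => h1 a
      _ = pd d (fun y => ∑ a, t a * φ y a) x :=
          pd_sum d _ x (fun a => (hdiff a x).const_mul _)
      _ = pd d (fun _ => 0) x := by
          congr 1; funext y; exact hspacelike y
      _ = 0 := by unfold pd; simp
  have main : ∀ x b d, ricci (christoffel t φ) x b d =
      (∑ n, pd n (fun y => φ y n) x) * (t b * t d) := by
    intro x b d
    have hquad : ∀ a : Fin 4, (∑ n, (christoffel t φ x a n d * christoffel t φ x n b a
        - christoffel t φ x a n a * christoffel t φ x n b d)) = 0 := by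
      intro a
      apply Finset.sum_eq_zero
      intro n _
      simp only [christoffel]
      ring
    have hΓ1 : ∀ a : Fin 4, pd d (fun y => christoffel t φ y a b a) x
        = -(t b * t a) * pd d (fun y => φ y a) x := by
      intro a
      have h : (fun y => christoffel t φ y a b a) = fun y => (-(t b * t a)) * φ y a := by
        funext y; simp only [christoffel]; ring
      rw [h, pd_const_mul d _ _ x (hdiff a x)]
    have hΓ2 : ∀ a : Fin 4, pd a (fun y => christoffel t φ y a b d) x
        = -(t b * t d) * pd a (fun y => φ y a) x := by
      intro a
      have h : (fun y => christoffel t φ y a b d) = fun y => (-(t b * t d)) * φ y a := by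
        funext y; simp only [christoffel]; ring
      rw [h, pd_const_mul a _ _ x (hdiff a x)]
    calc ricci (christoffel t φ) x b d
        = ∑ a, (pd d (fun y => christoffel t φ y a b a) x
            - pd a (fun y => christoffel t φ y a b d) x
            + ∑ n, (christoffel t φ x a n d * christoffel t φ x n b a
              - christoffel t φ x a n a * christoffel t φ x n b d)) := by
          simp only [ricci, riemann]
      _ = ∑ a, (-(t b * t a) * pd d (fun y => φ y a) x
            - (-(t b * t d)) * pd a (fun y => φ y a) x) := by
          refine Finset.sum_congr rfl fun a _ => ?_
          rw [hΓ1 a, hΓ2 a, hquad a, add_zero]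
      _ = -(t b) * (∑ a, t a * pd d (fun y => φ y a) x)
          + (t b * t d) * ∑ a, pd a (fun y => φ y a) x := by
          rw [Finset.mul_sum, Finset.mul_sum, ← Finset.sum_add_distrib]
          refine Finset.sum_congr rfl fun a _ => ?_
          ring
      _ = (∑ n, pd n (fun y => φ y n) x) * (t b * t d) := by
          rw [key d x]; ring
  exact ⟨main, fun ρ hρ x b d => by rw [main x b d, hρ x]⟩
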